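/- Let Θ*∈S^d be positive definite and δ∈[0,2]. Let Θ∈S^d be positive semidefinite with Θ⪯Θ* and ‖Θ^{1/2}Θ*^{−1/2}−I‖ ≤ δ, and let H∈S^d satisfy −Θ*^{−1} ≺ H ≺ Θ*^{−1}. Then −(1/2)ln det(I − Θ^{1/2}HΘ^{1/2}) ≤ Υ(H;Θ). -/

import Mathlib

/-!
Write `S = Θ*^{1/2}`, `B = S H S` and `Q = Θ^{1/2} S⁻¹`. Then `Θ^{1/2} H Θ^{1/2} = A := Q B Qᵀ`,
`‖Q‖ ≤ 1` because `Θ ⪯ Θ*`, `‖Q - I‖ ≤ δ` by hypothesis, and `-I ≺ B ≺ I`, i.e. `‖B‖ < 1`.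
Concavity of `ln det` gives `ln det (I - B) - ln det (I - A) ≤ tr ((I - A)⁻¹ (A - B))`. Splitting
`(I - A)⁻¹ = I + (I - A)⁻¹ A` leaves `tr (A - B) = tr ((Θ - Θ*) H)` plus a remainder of at most
`‖A‖_F ‖A - B‖_F / (1 - ‖A‖) ≤ 2δ ‖B‖_F² / (1 - ‖B‖)`, since `‖A‖ ≤ ‖B‖`, `‖A‖_F ≤ ‖B‖_F` and
`A - B = (Q - I) B Qᵀ + B (Q - I)ᵀ`.
-/

open Matrix MeasureTheory Real Filter

noncomputable section

/-- Frobenius norm of a matrix. -/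
def frobNorm {d : ℕ} (A : Matrix (Fin d) (Fin d) ℝ) : ℝ :=
  Real.sqrt (∑ i, ∑ j, (A i j) ^ 2)

/-- Spectral norm of a matrix. -/
def specNorm {d : ℕ} (A : Matrix (Fin d) (Fin d) ℝ) : ℝ :=
  ‖Matrix.toEuclideanCLM (𝕜 := ℝ) A‖

open scoped Classical in
/-- The square root of a positive semidefinite real matrix (junk value `0` otherwise). -/
def msqrt {d : ℕ} (A : Matrix (Fin d) (Fin d) ℝ) : Matrix (Fin d) (Fin d) ℝ :=
  if h : A.PosSemidef then
    (h.1.eigenvectorUnitary : Matrix (Fin d) (Fin d) ℝ) *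
      Matrix.diagonal (fun i => Real.sqrt (h.1.eigenvalues i)) *
      (star h.1.eigenvectorUnitary : Matrix (Fin d) (Fin d) ℝ)
  else 0

/-- The standard Gaussian distribution on ℝ^d. -/
def stdGaussian (d : ℕ) : Measure (Fin d → ℝ) :=
  Measure.pi fun _ => ProbabilityTheory.gaussianReal 0 1

/-- The Gaussian distribution `N(θ,Θ)` on ℝ^d: the law of `θ + Θ^{1/2} ξ`. -/
def gaussianVec {d : ℕ} (θ : Fin d → ℝ) (Θ : Matrix (Fin d) (Fin d) ℝ) :
    Measure (Fin d → ℝ) :=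
  (stdGaussian d).map (fun ξ => θ + (msqrt Θ).mulVec ξ)

/-- The (d+1)×(d+1) symmetric matrix `[[H,h];[hᵀ,0]]`. -/
def liftSym {d : ℕ} (H : Matrix (Fin d) (Fin d) ℝ) (h : Fin d → ℝ) :
    Matrix (Fin (d+1)) (Fin (d+1)) ℝ := fun i j =>
  if hi : (i : ℕ) < d then
    if hj : (j : ℕ) < d then H ⟨i, hi⟩ ⟨j, hj⟩ else h ⟨i, hi⟩
  else if hj : (j : ℕ) < d then h ⟨j, hj⟩ else 0

/-- The d×(d+1) matrix `[H,h]`. -/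
def liftRect {d : ℕ} (H : Matrix (Fin d) (Fin d) ℝ) (h : Fin d → ℝ) :
    Matrix (Fin d) (Fin (d+1)) ℝ := fun i j =>
  if hj : (j : ℕ) < d then H i ⟨j, hj⟩ else h i

/-- The vector `[θ;1] ∈ ℝ^{d+1}`. -/
def append1 {d : ℕ} (θ : Fin d → ℝ) : Fin (d+1) → ℝ := fun i =>
  if hi : (i : ℕ) < d then θ ⟨i, hi⟩ else 1

/-- `Υ(H;Θ)`. -/
def Upsilon {d : ℕ} (Θstar : Matrix (Fin d) (Fin d) ℝ) (δ : ℝ)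
    (H Θ : Matrix (Fin d) (Fin d) ℝ) : ℝ :=
  -(1/2) * Real.log ((1 - msqrt Θstar * H * msqrt Θstar).det)
  + (1/2) * ((Θ - Θstar) * H).trace
  + δ * (2 + δ) * (frobNorm (msqrt Θstar * H * msqrt Θstar)) ^ 2
      / (2 * (1 - specNorm (msqrt Θstar * H * msqrt Θstar)))

/-- `Γ(h,H;Z)`. -/
def Gammaf {d : ℕ} (Θstar : Matrix (Fin d) (Fin d) ℝ) (h : Fin d → ℝ)
    (H : Matrix (Fin d) (Fin d) ℝ) (Z : Matrix (Fin (d+1)) (Fin (d+1)) ℝ) : ℝ :=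
  (1/2) * (Z * (liftSym H h + (liftRect H h)ᵀ * (Θstar⁻¹ - H)⁻¹ * liftRect H h)).trace

/-- `Φ(h,H;Θ,Z) = Υ(H;Θ) + Γ(h,H;Z)`. -/
def PhiG {d : ℕ} (Θstar : Matrix (Fin d) (Fin d) ℝ) (δ : ℝ) (h : Fin d → ℝ)
    (H Θ : Matrix (Fin d) (Fin d) ℝ) (Z : Matrix (Fin (d+1)) (Fin (d+1)) ℝ) : ℝ :=
  Upsilon Θstar δ H Θ + Gammaf Θstar h H Z

namespace Matrix

variable {n : Type*} [Fintype n] [DecidableEq n]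

theorem IsHermitian.posDef_one_sub_iff {B : Matrix n n ℝ} (hB : B.IsHermitian) :
    (1 - B).PosDef ↔ ∀ i, hB.eigenvalues i < 1 := by
  conv_lhs =>
    rw [hB.spectral_theorem, ← map_one (Unitary.conjStarAlgAut ℝ _ hB.eigenvectorUnitary),
      ← map_sub, Unitary.conjStarAlgAut_apply, Unitary.isUnit_coe.posDef_star_right_conjugate_iff,
      ← diagonal_one, diagonal_sub, posDef_diagonal_iff]
  simp

theorem IsHermitian.posDef_one_add_iff {B : Matrix n n ℝ} (hB : B.IsHermitian) :
    (1 + B).PosDef ↔ ∀ i, -1 < hB.eigenvalues i := by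
  conv_lhs =>
    rw [hB.spectral_theorem, ← map_one (Unitary.conjStarAlgAut ℝ _ hB.eigenvectorUnitary),
      ← map_add, Unitary.conjStarAlgAut_apply, Unitary.isUnit_coe.posDef_star_right_conjugate_iff,
      ← diagonal_one, diagonal_add, posDef_diagonal_iff]
  simp [neg_lt_iff_pos_add']

theorem IsHermitian.posSemidef_one_sub_iff {B : Matrix n n ℝ} (hB : B.IsHermitian) :
    (1 - B).PosSemidef ↔ ∀ i, hB.eigenvalues i ≤ 1 := by
  conv_lhs =>
    rw [hB.spectral_theorem, ← map_one (Unitary.conjStarAlgAut ℝ _ hB.eigenvectorUnitary),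
      ← map_sub, Unitary.conjStarAlgAut_apply,
      Unitary.isUnit_coe.posSemidef_star_right_conjugate_iff, ← diagonal_one, diagonal_sub,
      posSemidef_diagonal_iff]
  simp

theorem PosDef.log_det_le_trace_sub_card {W : Matrix n n ℝ} (hW : W.PosDef) :
    Real.log W.det ≤ W.trace - Fintype.card n := by
  have hpos := hW.eigenvalues_pos
  rw [hW.1.det_eq_prod_eigenvalues, hW.1.trace_eq_sum_eigenvalues]
  simp only [RCLike.ofReal_real_eq_id, id]
  rw [Real.log_prod fun i _ => (hpos i).ne']
  calc ∑ i, Real.log (hW.1.eigenvalues i) ≤ ∑ i, (hW.1.eigenvalues i - 1) :=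
        Finset.sum_le_sum fun i _ => Real.log_le_sub_one_of_pos (hpos i)
    _ = _ := by simp [Finset.sum_sub_distrib]

open scoped MatrixOrder in
theorem PosDef.log_det_sub_log_det_le {M N : Matrix n n ℝ} (hM : M.PosDef) (hN : N.PosDef) :
    Real.log M.det - Real.log N.det ≤ (N⁻¹ * (M - N)).trace := by
  set C := CFC.sqrt N
  have hCC : C * C = N := CFC.sqrt_mul_sqrt_self N hN.posSemidef.nonneg
  have hCstar : star C = C := (CFC.sqrt_nonneg N).isSelfAdjoint
  have hC : IsUnit C := isUnit_of_mul_isUnit_left (hCC ▸ hN.isUnit)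
  have hW : (C⁻¹ * M * C⁻¹).PosDef := by
    have h := (isUnit_nonsing_inv_iff.mpr hC).posDef_star_left_conjugate_iff.mpr hM
    rwa [star_eq_conjTranspose, conjTranspose_nonsing_inv, ← star_eq_conjTranspose, hCstar] at h
  have hNinv : N⁻¹ = C⁻¹ * C⁻¹ := by rw [← hCC, mul_inv_rev]
  have hdetN : N.det = C.det * C.det := by rw [← hCC, det_mul]
  have hdet : (C⁻¹ * M * C⁻¹).det = M.det / N.det := by
    rw [det_mul, det_mul, det_nonsing_inv, Ring.inverse_eq_inv, hdetN]
    field_simp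
  have htr : (C⁻¹ * M * C⁻¹).trace = (N⁻¹ * M).trace := by
    rw [trace_mul_cycle, hNinv]
  have hle := hW.log_det_le_trace_sub_card
  rw [hdet, htr, Real.log_div hM.det_pos.ne' hN.det_pos.ne'] at hle
  rwa [mul_sub, nonsing_inv_mul _ ((isUnit_iff_isUnit_det N).mp hN.isUnit), trace_sub, trace_one]

end Matrix

section MatrixSqrt

variable {d : ℕ} {A : Matrix (Fin d) (Fin d) ℝ}

theorem msqrt_eq_conjStarAlgAut (hA : A.PosSemidef) :
    msqrt A = Unitary.conjStarAlgAut ℝ _ hA.1.eigenvectorUnitary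
      (diagonal fun i => √(hA.1.eigenvalues i)) := by
  rw [msqrt, dif_pos hA, Unitary.conjStarAlgAut_apply]

theorem msqrt_mul_self (hA : A.PosSemidef) : msqrt A * msqrt A = A := by
  conv_rhs => rw [hA.1.spectral_theorem]
  rw [msqrt_eq_conjStarAlgAut hA, ← map_mul, diagonal_mul_diagonal]
  congr 2
  ext i
  simp [Real.mul_self_sqrt (hA.eigenvalues_nonneg i)]

theorem isHermitian_msqrt (hA : A.PosSemidef) : (msqrt A).IsHermitian := by
  rw [msqrt_eq_conjStarAlgAut hA, Unitary.conjStarAlgAut_apply, star_eq_conjTranspose]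
  exact isHermitian_mul_mul_conjTranspose _ (isHermitian_diagonal _)

theorem transpose_msqrt (hA : A.PosSemidef) : (msqrt A)ᵀ = msqrt A := by
  rw [← conjTranspose_eq_transpose_of_trivial]
  exact isHermitian_msqrt hA

theorem isUnit_msqrt (hA : A.PosDef) : IsUnit (msqrt A) :=
  isUnit_of_mul_isUnit_left ((msqrt_mul_self hA.posSemidef).symm ▸ hA.isUnit)

theorem isUnit_det_msqrt (hA : A.PosDef) : IsUnit (msqrt A).det :=
  (isUnit_iff_isUnit_det _).mp (isUnit_msqrt hA)

theorem msqrt_mul_inv_mul_msqrt (hA : A.PosDef) : msqrt A * A⁻¹ * msqrt A = 1 := by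
  set S := msqrt A
  have hSS : S * S = A := msqrt_mul_self hA.posSemidef
  have hS : IsUnit S.det := isUnit_det_msqrt hA
  rw [← hSS, Matrix.mul_inv_rev, ← mul_assoc, mul_nonsing_inv _ hS, one_mul,
    nonsing_inv_mul _ hS]

theorem inv_msqrt_mul_mul_inv_msqrt (hA : A.PosDef) : (msqrt A)⁻¹ * A * (msqrt A)⁻¹ = 1 := by
  set S := msqrt A
  have hSS : S * S = A := msqrt_mul_self hA.posSemidef
  have hS : IsUnit S.det := isUnit_det_msqrt hA
  rw [← hSS, ← mul_assoc, nonsing_inv_mul _ hS, one_mul, mul_nonsing_inv _ hS]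

end MatrixSqrt

section SpecNorm

open scoped Matrix.Norms.L2Operator

variable {d : ℕ}

theorem specNorm_eq_l2_opNorm (A : Matrix (Fin d) (Fin d) ℝ) : specNorm A = ‖A‖ := rfl

theorem specNorm_nonneg (A : Matrix (Fin d) (Fin d) ℝ) : 0 ≤ specNorm A := norm_nonneg A

theorem specNorm_mul_le (A B : Matrix (Fin d) (Fin d) ℝ) :
    specNorm (A * B) ≤ specNorm A * specNorm B :=
  norm_mul_le A B

theorem specNorm_transpose (A : Matrix (Fin d) (Fin d) ℝ) : specNorm Aᵀ = specNorm A := by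
  rw [specNorm_eq_l2_opNorm, ← conjTranspose_eq_transpose_of_trivial, l2_opNorm_conjTranspose]
  rfl

theorem specNorm_eq_norm_eigenvalues {B : Matrix (Fin d) (Fin d) ℝ} (hB : B.IsHermitian) :
    specNorm B = ‖hB.eigenvalues‖ := by
  rw [specNorm_eq_l2_opNorm]
  conv_lhs => rw [hB.spectral_theorem, Unitary.conjStarAlgAut_apply, ← Unitary.coe_star,
    CStarRing.norm_mul_coe_unitary, CStarRing.norm_coe_unitary_mul, l2_opNorm_diagonal]
  rfl

theorem specNorm_lt_one_of_posDef {B : Matrix (Fin d) (Fin d) ℝ} (hB : B.IsHermitian)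
    (h₁ : (1 - B).PosDef) (h₂ : (1 + B).PosDef) : specNorm B < 1 := by
  rw [specNorm_eq_norm_eigenvalues hB, pi_norm_lt_iff one_pos]
  intro i
  rw [Real.norm_eq_abs, abs_lt]
  exact ⟨hB.posDef_one_add_iff.mp h₂ i, hB.posDef_one_sub_iff.mp h₁ i⟩

theorem posDef_one_sub_of_specNorm_lt_one {A : Matrix (Fin d) (Fin d) ℝ} (hA : A.IsHermitian)
    (h : specNorm A < 1) : (1 - A).PosDef := by
  refine hA.posDef_one_sub_iff.mpr fun i => (le_abs_self _).trans_lt ?_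
  rw [specNorm_eq_norm_eigenvalues hA] at h
  exact (norm_le_pi_norm hA.eigenvalues i).trans_lt h

theorem specNorm_le_one_of_posSemidef_one_sub {Q : Matrix (Fin d) (Fin d) ℝ}
    (hQ : (1 - Qᵀ * Q).PosSemidef) : specNorm Q ≤ 1 := by
  have hM : (Qᵀ * Q).PosSemidef := by simpa using posSemidef_conjTranspose_mul_self Q
  have hM1 : specNorm (Qᵀ * Q) ≤ 1 := by
    rw [specNorm_eq_norm_eigenvalues hM.1, pi_norm_le_iff_of_nonneg zero_le_one]
    intro i
    rw [Real.norm_eq_abs, abs_le]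
    exact ⟨by linarith [hM.eigenvalues_nonneg i], hM.1.posSemidef_one_sub_iff.mp hQ i⟩
  have hsq : specNorm (Qᵀ * Q) = specNorm Q * specNorm Q := by
    rw [specNorm_eq_l2_opNorm, ← conjTranspose_eq_transpose_of_trivial,
      l2_opNorm_conjTranspose_mul_self]
    rfl
  nlinarith [specNorm_nonneg Q]

theorem isUnit_det_one_sub_of_specNorm_lt_one {A : Matrix (Fin d) (Fin d) ℝ}
    (h : specNorm A < 1) : IsUnit (1 - A).det :=
  (isUnit_iff_isUnit_det _).mp (isUnit_one_sub_of_norm_lt_one h)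

theorem specNorm_inv_one_sub_le {A : Matrix (Fin d) (Fin d) ℝ} (h : specNorm A < 1) :
    specNorm (1 - A)⁻¹ ≤ (1 - specNorm A)⁻¹ := by
  simp only [specNorm_eq_l2_opNorm] at h ⊢
  rw [nonsing_inv_eq_ringInverse, ← geom_series_eq_inverse A h]
  have h1 : ‖(1 : Matrix (Fin d) (Fin d) ℝ)‖ ≤ 1 := by
    rw [← specNorm_eq_l2_opNorm, specNorm, map_one]
    exact ContinuousLinearMap.norm_id_le
  linarith [tsum_geometric_le_of_norm_lt_one A h]

end SpecNorm

section FrobNorm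

variable {d : ℕ}

theorem frobNorm_nonneg (A : Matrix (Fin d) (Fin d) ℝ) : 0 ≤ frobNorm A := Real.sqrt_nonneg _

theorem frobNorm_transpose (A : Matrix (Fin d) (Fin d) ℝ) : frobNorm Aᵀ = frobNorm A := by
  rw [frobNorm, frobNorm, Finset.sum_comm]
  rfl

attribute [local instance] Matrix.frobeniusNormedAddCommGroup in
theorem frobNorm_eq_frobenius_norm (A : Matrix (Fin d) (Fin d) ℝ) : frobNorm A = ‖A‖ := by
  simp [frobNorm, Matrix.frobenius_norm_def, Real.sqrt_eq_rpow]

attribute [local instance] Matrix.frobeniusNormedAddCommGroup in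
theorem frobNorm_add_le (A B : Matrix (Fin d) (Fin d) ℝ) :
    frobNorm (A + B) ≤ frobNorm A + frobNorm B := by
  simpa only [frobNorm_eq_frobenius_norm] using norm_add_le A B

theorem trace_mul_le_frobNorm_mul (X Y : Matrix (Fin d) (Fin d) ℝ) :
    (X * Y).trace ≤ frobNorm X * frobNorm Y := by
  calc (X * Y).trace = ∑ p : Fin d × Fin d, X p.1 p.2 * Yᵀ p.1 p.2 := by
        rw [Fintype.sum_prod_type]
        rfl
    _ ≤ √(∑ p : Fin d × Fin d, X p.1 p.2 ^ 2) * √(∑ p : Fin d × Fin d, Yᵀ p.1 p.2 ^ 2) :=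
        Real.sum_mul_le_sqrt_mul_sqrt _ _ _
    _ = frobNorm X * frobNorm Y := by
        rw [Fintype.sum_prod_type, Fintype.sum_prod_type, ← frobNorm_transpose Y]
        rfl

theorem frobNorm_sq_eq_sum_norm_col_sq (X : Matrix (Fin d) (Fin d) ℝ) :
    frobNorm X ^ 2 = ∑ j, ‖WithLp.toLp 2 (Xᵀ j)‖ ^ 2 := by
  rw [frobNorm, Real.sq_sqrt (by positivity), Finset.sum_comm]
  simp [EuclideanSpace.norm_sq_eq]

theorem frobNorm_mul_le (M X : Matrix (Fin d) (Fin d) ℝ) :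
    frobNorm (M * X) ≤ specNorm M * frobNorm X := by
  have hcol (j : Fin d) :
      ‖WithLp.toLp 2 ((M * X)ᵀ j)‖ ≤ specNorm M * ‖WithLp.toLp 2 (Xᵀ j)‖ :=
    (Matrix.toEuclideanCLM (𝕜 := ℝ) M).le_opNorm (WithLp.toLp 2 (Xᵀ j))
  have hsq : frobNorm (M * X) ^ 2 ≤ (specNorm M * frobNorm X) ^ 2 := by
    rw [mul_pow, frobNorm_sq_eq_sum_norm_col_sq, frobNorm_sq_eq_sum_norm_col_sq, Finset.mul_sum]
    gcongr with j
    rw [← mul_pow]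
    exact pow_le_pow_left₀ (norm_nonneg _) (hcol j) 2
  exact le_of_pow_le_pow_left₀ two_ne_zero
    (mul_nonneg (specNorm_nonneg M) (frobNorm_nonneg X)) hsq

theorem frobNorm_mul_le' (X M : Matrix (Fin d) (Fin d) ℝ) :
    frobNorm (X * M) ≤ frobNorm X * specNorm M := by
  rw [← frobNorm_transpose, transpose_mul, mul_comm, ← frobNorm_transpose X,
    ← specNorm_transpose M]
  exact frobNorm_mul_le Mᵀ Xᵀ

end FrobNorm

section Conjugation

variable {d : ℕ}

theorem specNorm_conj_le {Q : Matrix (Fin d) (Fin d) ℝ} (hQ : specNorm Q ≤ 1)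
    (B : Matrix (Fin d) (Fin d) ℝ) : specNorm (Q * B * Qᵀ) ≤ specNorm B := by
  have hQt : specNorm Qᵀ ≤ 1 := (specNorm_transpose Q).trans_le hQ
  calc specNorm (Q * B * Qᵀ) ≤ specNorm Q * specNorm B * specNorm Qᵀ :=
        (specNorm_mul_le _ _).trans <|
          mul_le_mul_of_nonneg_right (specNorm_mul_le _ _) (specNorm_nonneg _)
    _ ≤ 1 * specNorm B * 1 :=
        mul_le_mul (mul_le_mul_of_nonneg_right hQ (specNorm_nonneg B)) hQt (specNorm_nonneg _)
          (mul_nonneg zero_le_one (specNorm_nonneg B))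
    _ = specNorm B := by ring

theorem frobNorm_mul_mul_le (M X N : Matrix (Fin d) (Fin d) ℝ) :
    frobNorm (M * X * N) ≤ specNorm M * frobNorm X * specNorm N :=
  (frobNorm_mul_le' _ _).trans <|
    mul_le_mul_of_nonneg_right (frobNorm_mul_le _ _) (specNorm_nonneg _)

theorem frobNorm_conj_le {Q : Matrix (Fin d) (Fin d) ℝ} (hQ : specNorm Q ≤ 1)
    (B : Matrix (Fin d) (Fin d) ℝ) : frobNorm (Q * B * Qᵀ) ≤ frobNorm B := by
  have hQt : specNorm Qᵀ ≤ 1 := (specNorm_transpose Q).trans_le hQ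
  calc frobNorm (Q * B * Qᵀ) ≤ specNorm Q * frobNorm B * specNorm Qᵀ :=
        frobNorm_mul_mul_le _ _ _
    _ ≤ 1 * frobNorm B * 1 :=
        mul_le_mul (mul_le_mul_of_nonneg_right hQ (frobNorm_nonneg B)) hQt (specNorm_nonneg _)
          (mul_nonneg zero_le_one (frobNorm_nonneg B))
    _ = frobNorm B := by ring

theorem frobNorm_conj_sub_le {Q : Matrix (Fin d) (Fin d) ℝ} {δ : ℝ} (hQ : specNorm Q ≤ 1)
    (hQδ : specNorm (Q - 1) ≤ δ) (B : Matrix (Fin d) (Fin d) ℝ) :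
    frobNorm (Q * B * Qᵀ - B) ≤ 2 * δ * frobNorm B := by
  have hQt : specNorm Qᵀ ≤ 1 := (specNorm_transpose Q).trans_le hQ
  have hQδt : specNorm (Q - 1)ᵀ ≤ δ := (specNorm_transpose _).trans_le hQδ
  have hδ : 0 ≤ δ := (specNorm_nonneg _).trans hQδ
  have hF := frobNorm_nonneg B
  calc frobNorm (Q * B * Qᵀ - B) = frobNorm ((Q - 1) * B * Qᵀ + B * (Q - 1)ᵀ) := by
        rw [transpose_sub, transpose_one]
        noncomm_ring
    _ ≤ specNorm (Q - 1) * frobNorm B * specNorm Qᵀ + frobNorm B * specNorm (Q - 1)ᵀ :=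
        (frobNorm_add_le _ _).trans (add_le_add (frobNorm_mul_mul_le _ _ _) (frobNorm_mul_le' _ _))
    _ ≤ δ * frobNorm B * 1 + frobNorm B * δ :=
        add_le_add
          (mul_le_mul (mul_le_mul_of_nonneg_right hQδ hF) hQt (specNorm_nonneg _)
            (mul_nonneg hδ hF))
          (mul_le_mul_of_nonneg_left hQδt hF)
    _ = 2 * δ * frobNorm B := by ring

theorem trace_inv_one_sub_mul_le {A : Matrix (Fin d) (Fin d) ℝ} (hA : specNorm A < 1)
    (C : Matrix (Fin d) (Fin d) ℝ) :
    ((1 - A)⁻¹ * C).trace ≤ C.trace + frobNorm A * frobNorm C / (1 - specNorm A) := by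
  have hdet := isUnit_det_one_sub_of_specNorm_lt_one hA
  have hsplit : (1 - A)⁻¹ = 1 + (1 - A)⁻¹ * A := by
    have h := nonsing_inv_mul (1 - A) hdet
    rw [mul_sub, mul_one] at h
    exact sub_eq_iff_eq_add.mp h
  rw [hsplit, add_mul, one_mul, trace_add, add_le_add_iff_left]
  calc ((1 - A)⁻¹ * A * C).trace ≤ frobNorm ((1 - A)⁻¹ * A) * frobNorm C :=
        trace_mul_le_frobNorm_mul _ _
    _ ≤ (1 - specNorm A)⁻¹ * frobNorm A * frobNorm C := by
        refine mul_le_mul_of_nonneg_right ((frobNorm_mul_le _ _).trans ?_) (frobNorm_nonneg C)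
        exact mul_le_mul_of_nonneg_right (specNorm_inv_one_sub_le hA) (frobNorm_nonneg A)
    _ = frobNorm A * frobNorm C / (1 - specNorm A) := by ring

end Conjugation

theorem neg_half_log_det_one_sub_conj_le {d : ℕ} {B Q : Matrix (Fin d) (Fin d) ℝ} {δ : ℝ}
    (hB : B.IsHermitian) (hBn : specNorm B < 1) (hQ : specNorm Q ≤ 1)
    (hQδ : specNorm (Q - 1) ≤ δ) :
    -(1/2) * Real.log (1 - Q * B * Qᵀ).det ≤
      -(1/2) * Real.log (1 - B).det + (1/2) * (Q * B * Qᵀ - B).trace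
        + δ * frobNorm B ^ 2 / (1 - specNorm B) := by
  set A := Q * B * Qᵀ
  have hA : A.IsHermitian := by
    simpa [conjTranspose_eq_transpose_of_trivial] using isHermitian_mul_mul_conjTranspose Q hB
  have hAn : specNorm A < 1 := (specNorm_conj_le hQ B).trans_lt hBn
  have hlog := (posDef_one_sub_of_specNorm_lt_one hB hBn).log_det_sub_log_det_le
    (posDef_one_sub_of_specNorm_lt_one hA hAn)
  rw [sub_sub_sub_cancel_left] at hlog
  have hδ : 0 ≤ δ := (specNorm_nonneg _).trans hQδ
  have hcorr : frobNorm A * frobNorm (A - B) / (1 - specNorm A)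
      ≤ frobNorm B * (2 * δ * frobNorm B) / (1 - specNorm B) := by
    have hF := frobNorm_nonneg B
    refine div_le_div₀ (by positivity) (mul_le_mul (frobNorm_conj_le hQ B)
      (frobNorm_conj_sub_le hQ hQδ B) (frobNorm_nonneg _) hF) (by linarith) ?_
    linarith [specNorm_conj_le hQ B]
  have hsplit := trace_inv_one_sub_mul_le hAn (A - B)
  have hrem : frobNorm B * (2 * δ * frobNorm B) / (1 - specNorm B)
      = 2 * (δ * frobNorm B ^ 2 / (1 - specNorm B)) := by ring
  linarith

section Whitening

variable {d : ℕ} {Θstar : Matrix (Fin d) (Fin d) ℝ}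

theorem posDef_one_sub_msqrt_conj (hstar : Θstar.PosDef) {H : Matrix (Fin d) (Fin d) ℝ}
    (h : (Θstar⁻¹ - H).PosDef) : (1 - msqrt Θstar * H * msqrt Θstar).PosDef := by
  have hconj := (isUnit_msqrt hstar).posDef_star_left_conjugate_iff.mpr h
  rwa [star_eq_conjTranspose, (isHermitian_msqrt hstar.posSemidef).eq, mul_sub, sub_mul,
    msqrt_mul_inv_mul_msqrt hstar] at hconj

theorem posDef_one_add_msqrt_conj (hstar : Θstar.PosDef) {H : Matrix (Fin d) (Fin d) ℝ}
    (h : (H + Θstar⁻¹).PosDef) : (1 + msqrt Θstar * H * msqrt Θstar).PosDef := by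
  have hconj := (isUnit_msqrt hstar).posDef_star_left_conjugate_iff.mpr h
  rwa [star_eq_conjTranspose, (isHermitian_msqrt hstar.posSemidef).eq, mul_add, add_mul,
    msqrt_mul_inv_mul_msqrt hstar, add_comm] at hconj

theorem specNorm_msqrt_mul_inv_msqrt_le_one {Θ : Matrix (Fin d) (Fin d) ℝ} (hΘ : Θ.PosSemidef)
    (hstar : Θstar.PosDef) (hle : (Θstar - Θ).PosSemidef) :
    specNorm (msqrt Θ * (msqrt Θstar)⁻¹) ≤ 1 := by
  apply specNorm_le_one_of_posSemidef_one_sub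
  have hconj := hle.conjTranspose_mul_mul_same (msqrt Θstar)⁻¹
  rw [conjTranspose_nonsing_inv, (isHermitian_msqrt hstar.posSemidef).eq, mul_sub, sub_mul,
    inv_msqrt_mul_mul_inv_msqrt hstar] at hconj
  convert hconj using 2
  rw [transpose_mul, transpose_nonsing_inv, transpose_msqrt hstar.posSemidef, transpose_msqrt hΘ]
  conv_rhs => rw [← msqrt_mul_self hΘ]
  simp only [mul_assoc]

end Whitening

theorem statement4_general {d : ℕ} (Θstar : Matrix (Fin d) (Fin d) ℝ)
    (hstar : Θstar.PosDef) (δ : ℝ)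
    (Θ : Matrix (Fin d) (Fin d) ℝ) (hΘpsd : Θ.PosSemidef)
    (hΘle : (Θstar - Θ).PosSemidef)
    (hΘδ : specNorm (msqrt Θ * (msqrt Θstar)⁻¹ - 1) ≤ δ)
    (H : Matrix (Fin d) (Fin d) ℝ) (hHsym : H.IsSymm)
    (hH1 : (Θstar⁻¹ - H).PosDef) (hH2 : (H + Θstar⁻¹).PosDef) :
    -(1/2) * Real.log ((1 - msqrt Θ * H * msqrt Θ).det) ≤ Upsilon Θstar δ H Θ := by
  set S := msqrt Θstar
  set T := msqrt Θ
  have hS : Sᴴ = S := isHermitian_msqrt hstar.posSemidef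
  have hT : Tᵀ = T := transpose_msqrt hΘpsd
  have hB : (S * H * S).IsHermitian := by
    have hH : H.IsHermitian := (conjTranspose_eq_transpose_of_trivial H).trans hHsym
    simpa only [hS] using isHermitian_conjTranspose_mul_mul S hH
  have hBn : specNorm (S * H * S) < 1 := specNorm_lt_one_of_posDef hB
    (posDef_one_sub_msqrt_conj hstar hH1) (posDef_one_add_msqrt_conj hstar hH2)
  have hA : T * S⁻¹ * (S * H * S) * (T * S⁻¹)ᵀ = T * H * T := by
    have hSdet : IsUnit S.det := isUnit_det_msqrt hstar
    rw [transpose_mul, transpose_nonsing_inv, ← conjTranspose_eq_transpose_of_trivial S, hS, hT]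
    simp only [mul_assoc, nonsing_inv_mul_cancel_left _ _ hSdet,
      mul_nonsing_inv_cancel_left _ _ hSdet]
  have htr : (T * H * T - S * H * S).trace = ((Θ - Θstar) * H).trace := by
    rw [trace_sub, trace_mul_cycle T, trace_mul_cycle S, msqrt_mul_self hΘpsd,
      msqrt_mul_self hstar.posSemidef, sub_mul, trace_sub]
  have key := neg_half_log_det_one_sub_conj_le hB hBn
    (specNorm_msqrt_mul_inv_msqrt_le_one hΘpsd hstar hΘle) hΘδ
  rw [hA, htr] at key
  have hgap : δ * frobNorm (S * H * S) ^ 2 / (1 - specNorm (S * H * S))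
      ≤ δ * (2 + δ) * frobNorm (S * H * S) ^ 2 / (2 * (1 - specNorm (S * H * S))) := by
    rw [div_le_div_iff₀ (by linarith) (by linarith)]
    nlinarith [mul_nonneg (sq_nonneg δ) (sq_nonneg (frobNorm (S * H * S)))]
  unfold Upsilon
  linarith

/-- `−(1/2)·ln det(I − Θ^{1/2}HΘ^{1/2}) ≤ Υ(H;Θ)` for `Θ ⪯ Θ*` PSD
with `‖Θ^{1/2}Θ*^{−1/2} − I‖ ≤ δ` and `−Θ*⁻¹ ≺ H ≺ Θ*⁻¹`. -/
theorem statement4 {d : ℕ} (Θstar : Matrix (Fin d) (Fin d) ℝ) (hstarSym : Θstar.IsSymm)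
    (hstar : Θstar.PosDef) (δ : ℝ) (hδ0 : 0 ≤ δ) (hδ2 : δ ≤ 2)
    (Θ : Matrix (Fin d) (Fin d) ℝ) (hΘsym : Θ.IsSymm) (hΘpsd : Θ.PosSemidef)
    (hΘle : (Θstar - Θ).PosSemidef)
    (hΘδ : specNorm (msqrt Θ * (msqrt Θstar)⁻¹ - 1) ≤ δ)
    (H : Matrix (Fin d) (Fin d) ℝ) (hHsym : H.IsSymm)
    (hH1 : (Θstar⁻¹ - H).PosDef) (hH2 : (H + Θstar⁻¹).PosDef) :
    -(1/2) * Real.log ((1 - msqrt Θ * H * msqrt Θ).det) ≤ Upsilon Θstar δ H Θ :=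
  statement4_general Θstar hstar δ Θ hΘpsd hΘle hΘδ H hHsym hH1 hH2

end
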